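/- Let V be a real vector space and B : V →ₗ[ℝ] V →ₗ[ℝ] ℝ a symmetric bilinear form. Suppose C₁, C₂, H ∈ V and a, b, c, h₁, h₂ ∈ ℝ satisfy B C₁ C₁ = -a, B C₂ C₂ = -b, B C₁ C₂ = c, B H C₁ = h₁, B H C₂ = h₂, with a > 0, b > 0, c > 0, h₁ > 0, h₂ > 0 and a·b > c². Then there exist vectors D₁ and D₂, each a linear combination of H, C₁ and C₂ with positive coefficients, such that B D₁ C₁ < 0 and B D₁ C₂ < 0, while B D₂ C₁ > 0 and B D₂ C₂ < 0. -/

import Mathlib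

/-- The key construction in the proof of implication a)⇒b) of Theorem 1.3:
two positive combinations `D₁`, `D₂` of `H, C₁, C₂` lying in different
simple Weyl chambers. -/
theorem exists_D1_D2 (V : Type*) [AddCommGroup V] [Module ℝ V]
    (B : V →ₗ[ℝ] V →ₗ[ℝ] ℝ) (hsymm : ∀ u v : V, B u v = B v u)
    (C₁ C₂ H : V) (a b c h₁ h₂ : ℝ)
    (h11 : B C₁ C₁ = -a) (h22 : B C₂ C₂ = -b) (h12 : B C₁ C₂ = c)
    (hH1 : B H C₁ = h₁) (hH2 : B H C₂ = h₂)
    (ha : 0 < a) (hb : 0 < b) (hc : 0 < c) (hh₁ : 0 < h₁) (hh₂ : 0 < h₂)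
    (hdet : c ^ 2 < a * b) :
    ∃ (p q r p' q' r' : ℝ), 0 < p ∧ 0 < q ∧ 0 < r ∧ 0 < p' ∧ 0 < q' ∧ 0 < r' ∧
      B (p • H + q • C₁ + r • C₂) C₁ < 0 ∧ B (p • H + q • C₁ + r • C₂) C₂ < 0 ∧
      0 < B (p' • H + q' • C₁ + r' • C₂) C₁ ∧ B (p' • H + q' • C₁ + r' • C₂) C₂ < 0 := by
  have h21 : B C₂ C₁ = c := by rw [hsymm C₂ C₁, h12]
  have hdet' : 0 < a * b - c ^ 2 := by linarith
  set q : ℝ := (b * h₁ + c * (h₂ + 1) + 1) / (a * b - c ^ 2) with hq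
  set r : ℝ := (h₂ + q * c + 1) / b with hr
  set q' : ℝ := h₁ / (2 * a) with hq'
  set r' : ℝ := (h₂ + q' * c + 1) / b with hr'
  have hqpos : 0 < q := div_pos (by nlinarith) hdet'
  have hq'pos : 0 < q' := div_pos hh₁ (by linarith)
  have hrpos : 0 < r := div_pos (by nlinarith) hb
  have hr'pos : 0 < r' := div_pos (by nlinarith) hb
  have hqeq : q * (a * b - c ^ 2) = b * h₁ + c * (h₂ + 1) + 1 := by
    rw [hq]; exact div_mul_cancel₀ _ hdet'.ne'
  have hreq : r * b = h₂ + q * c + 1 := by rw [hr]; field_simp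
  have hr'eq : r' * b = h₂ + q' * c + 1 := by rw [hr']; field_simp
  have hq'eq : q' * (2 * a) = h₁ := by rw [hq']; field_simp
  refine ⟨1, q, r, 1, q', r', one_pos, hqpos, hrpos, one_pos, hq'pos, hr'pos, ?_, ?_, ?_, ?_⟩ <;>
    simp only [map_add, map_smul, LinearMap.add_apply, LinearMap.smul_apply, smul_eq_mul,
      h11, h22, h12, h21, hH1, hH2]
  · nlinarith
  · nlinarith
  · nlinarith
  · nlinarith
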